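/- For every n ≥ 1, the homomorphism ι : Br_n^1 → Br_{n+1} maps the kernel of π¹ bijectively onto the kernel of π; that is, ι restricts to a group isomorphism PB_n^1 ≅ PB_{n+1} between the pure braid group with a frozen strand and the pure braid group on n+1 strands. -/

import Mathlib

/-!
Through `π`, the braid group `Br_{n+1}` permutes the strand positions `0, …, n`, and `ι` should
identify `Br_n^1` with the stabiliser of position `0`. Sending `β_i` to the transposition
`(i, i+1)` decorated with suitable labels in `Br_n^1` (a Reidemeister–Schreier cocycle) gives a
homomorphism from `Br_{n+1}` to the wreath product `Br_n^1 ≀ Sym(n+1)`; on `ι(Br_n^1)`, the label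
at position `0` is a left inverse of `ι`. Pushing the labels forward along `ι` gives the
Kaloujnine–Krasner embedding of `Br_{n+1}` attached to the coset representatives
`β_{k-1} ⋯ β_0`, so for a braid `g` with `π g` fixing `0`, `ι` maps the label of `g` at `0`
back to `g`. Hence `ι` is injective with image the stabiliser of `0`. Since `π ∘ ι` is `π¹`
followed by extending permutations of `{1, …, n}` to `{0, …, n}`, pure braids correspond to pure
braids.
-/

/-- The Artin braid relations on `N` generators `β_0, …, β_{N-1}`, recorded as relators:
`β_iβ_{i+1}β_i = β_{i+1}β_iβ_{i+1}` and `β_iβ_j = β_jβ_i` for `|i-j| ≥ 2`. -/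
def braidRels (N : ℕ) : Set (FreeGroup (Fin N)) :=
  { r | (∃ i j : Fin N, (i : ℕ) + 1 = (j : ℕ) ∧
          r = FreeGroup.of i * FreeGroup.of j * FreeGroup.of i *
              (FreeGroup.of j * FreeGroup.of i * FreeGroup.of j)⁻¹) ∨
        (∃ i j : Fin N, (i : ℕ) + 2 ≤ (j : ℕ) ∧
          r = FreeGroup.of i * FreeGroup.of j * (FreeGroup.of j * FreeGroup.of i)⁻¹) }

/-- The braid group on `N+1` strands, presented on the `N` generators `β_0, …, β_{N-1}`
subject to the Artin relations. -/
abbrev Braid (N : ℕ) : Type := PresentedGroup (braidRels N)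

/-- Generators of the braid group with a frozen strand `Br^1_{m+1}`:
`X i` (for `i : Fin (m+1)`) is the generator `X_{i+1}`, and `beta i` (for `i : Fin m`) is the
generator `β_{i+1}` (so the 1-based labels are `X_1, …, X_{m+1}` and `β_1, …, β_m`). -/
inductive FGen (m : ℕ) : Type
  | X : Fin (m + 1) → FGen m
  | beta : Fin m → FGen m

/-- The generator `X_{i+1}` as an element of the free group. -/
def Y {m : ℕ} (i : Fin (m + 1)) : FreeGroup (FGen m) := FreeGroup.of (FGen.X i)

/-- The generator `β_{i+1}` as an element of the free group. -/
def B {m : ℕ} (i : Fin m) : FreeGroup (FGen m) := FreeGroup.of (FGen.beta i)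

/-- The defining relators of the braid group with a frozen strand `Br^1_{m+1}`:
the braid relations among the `β`'s together with
`β_iX_iβ_i⁻¹ = X_{i+1}`, `β_iX_{i+1}β_i⁻¹ = X_{i+1}⁻¹X_iX_{i+1}` and `β_iX_jβ_i⁻¹ = X_j`
for `j ≠ i, i+1`. -/
def frozenRels (m : ℕ) : Set (FreeGroup (FGen m)) :=
  { r | (∃ i j : Fin m, (i : ℕ) + 1 = (j : ℕ) ∧
          r = B i * B j * B i * (B j * B i * B j)⁻¹) ∨
        (∃ i j : Fin m, (i : ℕ) + 2 ≤ (j : ℕ) ∧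
          r = B i * B j * (B j * B i)⁻¹) ∨
        (∃ i : Fin m, r = B i * Y i.castSucc * (B i)⁻¹ * (Y i.succ)⁻¹) ∨
        (∃ i : Fin m,
          r = B i * Y i.succ * (B i)⁻¹ * ((Y i.succ)⁻¹ * Y i.castSucc * Y i.succ)⁻¹) ∨
        (∃ (i : Fin m) (j : Fin (m + 1)), (j : ℕ) ≠ (i : ℕ) ∧ (j : ℕ) ≠ (i : ℕ) + 1 ∧
          r = B i * Y j * (B i)⁻¹ * (Y j)⁻¹) }

/-- The braid group with a frozen strand `Br^1_{m+1}` (so `Br^1_n` with `n = m+1 ≥ 1`). -/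
abbrev BrFrozen (m : ℕ) : Type := PresentedGroup (frozenRels m)

/-- The generator `β_k` of the braid group on `m+2` strands (junk value `1` out of range). -/
def bb (m : ℕ) (k : ℕ) : Braid (m + 1) :=
  if h : k < m + 1 then PresentedGroup.of (⟨k, h⟩ : Fin (m + 1)) else 1

/-- The word `β_k β_{k-1} ⋯ β_1 · β_0² · β_1⁻¹ ⋯ β_k⁻¹` in the braid group on `m+2`
strands; it is the prescribed image of the generator `X_{k+1}`. -/
def Xword (m : ℕ) (k : ℕ) : Braid (m + 1) :=
  (((List.range k).map fun j => bb m (k - j)).prod) * bb m 0 * bb m 0 *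
    (((List.range k).map fun j => bb m (k - j)).prod)⁻¹

open Equiv SemidirectProduct

section WreathProduct

variable {G α N : Type*} [Group G] [MulAction G α] [Group N]

attribute [local instance] arrowAction

lemma SemidirectProduct.mulAutArrow_mul_left_apply (a b : (α → N) ⋊[mulAutArrow] G) (x : α) :
    (a * b).left x = a.left x * b.left (a.right⁻¹ • x) := rfl

lemma SemidirectProduct.mulAutArrow_mul_left_apply_of_smul_eq
    {a : (α → N) ⋊[mulAutArrow] G} {x : α} (hx : a.right • x = x)
    (b : (α → N) ⋊[mulAutArrow] G) :
    (a * b).left x = a.left x * b.left x := by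
  rw [mulAutArrow_mul_left_apply, inv_smul_eq_iff.2 hx.symm]

lemma SemidirectProduct.mulAutArrow_inv_left_apply_of_smul_eq
    {a : (α → N) ⋊[mulAutArrow] G} {x : α} (hx : a.right • x = x) :
    a⁻¹.left x = (a.left x)⁻¹ :=
  eq_inv_of_mul_eq_one_right <| by
    rw [← mulAutArrow_mul_left_apply_of_smul_eq hx, mul_inv_cancel]; rfl

def kaloujnineKrasner {H : Type*} [Group H] (p : H →* G) (t : α → H) :
    H →* (α → H) ⋊[mulAutArrow] G where
  toFun g := ⟨fun x => (t x)⁻¹ * g * t ((p g)⁻¹ • x), p g⟩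
  map_one' := by ext <;> simp
  map_mul' g h := by
    ext x
    · simp only [mulAutArrow_mul_left_apply, map_mul, mul_inv_rev, mul_smul]
      group
    · exact map_mul p g h

def stabilizerEvalLeft (x : α) :
    (MulAction.stabilizer G x).comap (rightHom : (α → N) ⋊[mulAutArrow] G →* G) →* N where
  toFun w := w.1.left x
  map_one' := rfl
  map_mul' a b := mulAutArrow_mul_left_apply_of_smul_eq a.2 b.1

end WreathProduct

lemma conj_sq_of_braid {G : Type*} [Group G] {a b : G} (h : a * b * a = b * a * b) :
    b * (a * a) * b⁻¹ = a⁻¹ * (b * b) * a := by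
  have key : a * b * a * a = b * b * a * b := by
    rw [h, mul_assoc b a b, mul_assoc b, h]; group
  calc b * (a * a) * b⁻¹ = a⁻¹ * (a * b * a * a) * b⁻¹ := by group
    _ = a⁻¹ * (b * b) * a := by rw [key]; group

noncomputable def permSuccHom (n : ℕ) : Perm (Fin n) →* Perm (Fin (n + 1)) :=
  Perm.viaEmbeddingHom (Fin.succEmb n)

lemma permSuccHom_apply_zero {n : ℕ} (σ : Perm (Fin n)) : permSuccHom n σ 0 = 0 :=
  Perm.viaEmbedding_apply_of_notMem _ _ _ fun ⟨_, h⟩ => Fin.succ_ne_zero _ h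

lemma permSuccHom_apply_succ {n : ℕ} (σ : Perm (Fin n)) (x : Fin n) :
    permSuccHom n σ x.succ = (σ x).succ :=
  Perm.viaEmbedding_apply _ (Fin.succEmb n) x

lemma permSuccHom_swap {n : ℕ} (a b : Fin n) :
    permSuccHom n (swap a b) = swap a.succ b.succ := by
  ext x
  induction x using Fin.cases with
  | zero =>
    rw [permSuccHom_apply_zero,
      swap_apply_of_ne_of_ne (Fin.succ_ne_zero a).symm (Fin.succ_ne_zero b).symm]
  | succ x => rw [permSuccHom_apply_succ, (Fin.succ_injective n).swap_apply]

lemma permSuccHom_injective (n : ℕ) : Function.Injective (permSuccHom n) :=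
  Perm.viaEmbeddingHom_injective _

namespace BrFrozen

variable {m : ℕ}

/- `β k` and `X k` are the generators `β_{k+1}` and `X_{k+1}` indexed by `ℕ`, with junk value
`1` out of range; several relations then hold without range hypotheses. -/
def β (k : ℕ) : BrFrozen m := if h : k < m then .of (FGen.beta ⟨k, h⟩) else 1

def X (k : ℕ) : BrFrozen m := if h : k < m + 1 then .of (FGen.X ⟨k, h⟩) else 1

lemma β_of_lt {k : ℕ} (h : k < m) : (β k : BrFrozen m) = .of (FGen.beta ⟨k, h⟩) := dif_pos h

lemma β_of_le {k : ℕ} (h : m ≤ k) : (β k : BrFrozen m) = 1 := dif_neg (by omega)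

lemma X_of_lt {k : ℕ} (h : k < m + 1) : (X k : BrFrozen m) = .of (FGen.X ⟨k, h⟩) := dif_pos h

lemma X_of_le {k : ℕ} (h : m + 1 ≤ k) : (X k : BrFrozen m) = 1 := dif_neg (by omega)

lemma β_val (t : Fin m) : β t = .of (FGen.beta t) := β_of_lt t.isLt

lemma X_val (k : Fin (m + 1)) : X k = .of (FGen.X k) := X_of_lt k.isLt

lemma β_braid {a : ℕ} (h : a + 1 < m) :
    (β a : BrFrozen m) * β (a + 1) * β a = β (a + 1) * β a * β (a + 1) := by
  rw [β_of_lt h, β_of_lt (by omega : a < m)]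
  exact PresentedGroup.mk_eq_mk_of_mul_inv_mem (Or.inl ⟨⟨a, _⟩, ⟨a + 1, h⟩, rfl, rfl⟩)

lemma β_comm {a c : ℕ} (h : a + 2 ≤ c) : (β a : BrFrozen m) * β c = β c * β a := by
  rcases lt_or_ge c m with hc | hc
  · rw [β_of_lt hc, β_of_lt (by omega : a < m)]
    exact PresentedGroup.mk_eq_mk_of_mul_inv_mem
      (Or.inr (Or.inl ⟨⟨a, _⟩, ⟨c, hc⟩, h, rfl⟩))
  · simp [β_of_le hc]

lemma β_mul_X_self {a : ℕ} (h : a < m) : (β a : BrFrozen m) * X a = X (a + 1) * β a := by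
  rw [← mul_inv_eq_iff_eq_mul, β_of_lt h, X_of_lt (by omega : a < m + 1),
    X_of_lt (by omega : a + 1 < m + 1)]
  exact PresentedGroup.mk_eq_mk_of_mul_inv_mem (Or.inr (Or.inr (Or.inl ⟨⟨a, h⟩, rfl⟩)))

lemma β_mul_X_succ {a : ℕ} (h : a < m) :
    (β a : BrFrozen m) * X (a + 1) * (β a)⁻¹ = (X (a + 1))⁻¹ * X a * X (a + 1) := by
  rw [β_of_lt h, X_of_lt (by omega : a < m + 1), X_of_lt (by omega : a + 1 < m + 1)]
  exact PresentedGroup.mk_eq_mk_of_mul_inv_mem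
    (Or.inr (Or.inr (Or.inr (Or.inl ⟨⟨a, h⟩, rfl⟩))))

lemma β_X_comm {a j : ℕ} (h₁ : j ≠ a) (h₂ : j ≠ a + 1) :
    (β a : BrFrozen m) * X j = X j * β a := by
  rcases lt_or_ge a m with ha | ha
  · rcases lt_or_ge j (m + 1) with hj | hj
    · rw [← mul_inv_eq_iff_eq_mul, β_of_lt ha, X_of_lt hj]
      exact PresentedGroup.mk_eq_mk_of_mul_inv_mem
        (Or.inr (Or.inr (Or.inr (Or.inr ⟨⟨a, ha⟩, ⟨j, hj⟩, h₁, h₂, rfl⟩))))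
    · simp [X_of_le hj]
  · simp [β_of_le ha]

lemma X_mul_X_mul_β {a : ℕ} (h : a < m) :
    (X a : BrFrozen m) * X (a + 1) * β a = β a * X a * X (a + 1) := by
  calc X a * X (a + 1) * β a
      = X (a + 1) * ((X (a + 1))⁻¹ * X a * X (a + 1)) * β a := by group
    _ = (β a * X a * (β a)⁻¹) * (β a * X (a + 1) * (β a)⁻¹) * β a := by
      rw [β_mul_X_succ h, mul_inv_eq_iff_eq_mul.2 (β_mul_X_self h)]
    _ = β a * X a * X (a + 1) := by group

end BrFrozen

namespace Braid

variable {m : ℕ}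

lemma bb_of_lt {k : ℕ} (h : k < m + 1) : bb m k = .of (⟨k, h⟩ : Fin (m + 1)) := dif_pos h

lemma bb_of_le {k : ℕ} (h : m + 1 ≤ k) : bb m k = 1 := dif_neg (by omega)

lemma bb_braid {k : ℕ} (h : k + 1 < m + 1) :
    bb m k * bb m (k + 1) * bb m k = bb m (k + 1) * bb m k * bb m (k + 1) := by
  rw [bb_of_lt h, bb_of_lt (by omega : k < m + 1)]
  exact PresentedGroup.mk_eq_mk_of_mul_inv_mem (Or.inl ⟨⟨k, _⟩, ⟨k + 1, h⟩, rfl, rfl⟩)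

lemma bb_commute {k l : ℕ} (h : k + 2 ≤ l) : Commute (bb m k) (bb m l) := by
  rcases lt_or_ge l (m + 1) with hl | hl
  · rw [bb_of_lt hl, bb_of_lt (by omega : k < m + 1)]
    exact PresentedGroup.mk_eq_mk_of_mul_inv_mem (Or.inr ⟨⟨k, _⟩, ⟨l, hl⟩, h, rfl⟩)
  · rw [bb_of_le hl]
    exact Commute.one_right _

/- Coset representatives of the stabiliser of strand `0`: `transversal m k = β_{k-1} ⋯ β_0`
moves strand `0` to position `k`. -/
def transversal (m : ℕ) : ℕ → Braid (m + 1)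
  | 0 => 1
  | k + 1 => bb m k * transversal m k

lemma transversal_succ (k : ℕ) : transversal m (k + 1) = bb m k * transversal m k := rfl

lemma bb_commute_transversal {j k : ℕ} (h : k < j) : Commute (bb m j) (transversal m k) := by
  induction k with
  | zero => exact Commute.one_right _
  | succ k ih => exact ((bb_commute (by omega)).symm).mul_right (ih (by omega))

lemma bb_mul_transversal {i k : ℕ} (h : i + 2 ≤ k) (hk : k ≤ m + 1) :
    bb m i * transversal m k = transversal m k * bb m (i + 1) := by
  induction k, h using Nat.le_induction with
  | base =>
    simp only [transversal_succ, ← mul_assoc]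
    rw [bb_braid (by omega), mul_assoc _ _ (transversal m i),
      (bb_commute_transversal (by omega)).eq, ← mul_assoc]
  | succ k hik ih =>
    rw [transversal_succ, ← mul_assoc, (bb_commute hik).eq, mul_assoc, ih (by omega), mul_assoc]

lemma Xword_zero : Xword m 0 = bb m 0 * bb m 0 := by
  simp [Xword]

lemma Xword_succ (k : ℕ) :
    Xword m (k + 1) = bb m (k + 1) * Xword m k * (bb m (k + 1))⁻¹ := by
  have hl : ((List.range (k + 1)).map fun j => bb m (k + 1 - j))
      = bb m (k + 1) :: ((List.range k).map fun j => bb m (k - j)) := by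
    rw [List.range_succ_eq_map]
    simp [List.map_map, Function.comp_def, Nat.succ_sub_succ]
  rw [Xword, Xword, hl, List.prod_cons]
  group

lemma Xword_eq_conj {i : ℕ} (h : i < m + 1) :
    Xword m i = (transversal m i)⁻¹ * (bb m i * bb m i) * transversal m i := by
  induction i with
  | zero => simp [Xword_zero, transversal]
  | succ i ih =>
    have hc : Commute (bb m (i + 1)) (transversal m i) := bb_commute_transversal (by omega)
    calc Xword m (i + 1)
        = (bb m (i + 1) * (transversal m i)⁻¹) * (bb m i * bb m i) *
          (transversal m i * (bb m (i + 1))⁻¹) := by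
          rw [Xword_succ, ih (by omega)]; group
      _ = (transversal m i)⁻¹ * (bb m (i + 1) * (bb m i * bb m i) * (bb m (i + 1))⁻¹) *
          transversal m i := by
          rw [hc.inv_right.eq, ← hc.inv_left.eq]; group
      _ = (transversal m (i + 1))⁻¹ * (bb m (i + 1) * bb m (i + 1)) * transversal m (i + 1) := by
          rw [conj_sq_of_braid (bb_braid h), transversal_succ]; group

end Braid

open BrFrozen Braid

/- The label that `β_i` leaves at target position `n`, read off from
`β_i * transversal (swap i (i+1) n) = transversal n * ι (genCocycle i n)` (`map_genCocycle`). -/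
def genCocycle (m i n : ℕ) : BrFrozen m :=
  if n < i then β (i - 1) else if n = i then X i else if n = i + 1 then 1 else β i

section GenCocycle

variable {m i n : ℕ}

lemma genCocycle_of_lt (h : n < i) : genCocycle m i n = β (i - 1) := if_pos h

lemma genCocycle_self : genCocycle m i i = X i := by simp [genCocycle]

lemma genCocycle_succ : genCocycle m i (i + 1) = 1 := by simp [genCocycle]

lemma genCocycle_of_gt (h : i + 1 < n) : genCocycle m i n = β i := by
  simp [genCocycle, show ¬n < i by omega, show n ≠ i by omega, show n ≠ i + 1 by omega]

lemma genCocycle_braid (hi : i < m) (hn : n < m + 2) :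
    genCocycle m i n * genCocycle m (i + 1) (swap i (i + 1) n) *
        genCocycle m i (swap (i + 1) (i + 1 + 1) (swap i (i + 1) n)) =
      genCocycle m (i + 1) n * genCocycle m i (swap (i + 1) (i + 1 + 1) n) *
        genCocycle m (i + 1) (swap i (i + 1) (swap (i + 1) (i + 1 + 1) n)) := by
  rcases lt_or_ge n i with h | h
  · simp (disch := omega) only [swap_apply_of_ne_of_ne, genCocycle_of_lt]
    obtain ⟨k, rfl⟩ : ∃ k, i = k + 1 := ⟨i - 1, by omega⟩
    simpa using β_braid hi
  obtain rfl | rfl | rfl | h : n = i ∨ n = i + 1 ∨ n = i + 1 + 1 ∨ i + 1 + 1 < n := by omega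
  all_goals simp (disch := omega) only [swap_apply_left, swap_apply_right,
    swap_apply_of_ne_of_ne, genCocycle_self, genCocycle_succ, genCocycle_of_gt, genCocycle_of_lt,
    Nat.add_sub_cancel, mul_one, one_mul]
  · exact X_mul_X_mul_β hi
  · exact β_mul_X_self hi
  · exact β_braid (by omega)

lemma genCocycle_comm {j : ℕ} (h : i + 2 ≤ j) :
    genCocycle m i n * genCocycle m j (swap i (i + 1) n) =
      genCocycle m j n * genCocycle m i (swap j (j + 1) n) := by
  obtain h₁ | rfl | rfl | h₂ | rfl | rfl | h₃ : n < i ∨ n = i ∨ n = i + 1 ∨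
      (i + 1 < n ∧ n < j) ∨ n = j ∨ n = j + 1 ∨ j + 1 < n := by omega
  all_goals simp (disch := omega) only [swap_apply_left, swap_apply_right,
    swap_apply_of_ne_of_ne, genCocycle_self, genCocycle_succ, genCocycle_of_gt, genCocycle_of_lt,
    mul_one, one_mul]
  · exact β_comm (by omega)
  · exact (β_X_comm (by omega) (by omega)).symm
  · exact β_comm (by omega)
  · exact β_X_comm (by omega) (by omega)
  · exact β_comm h

end GenCocycle

abbrev FrozenWreath (m : ℕ) : Type :=
  (Fin (m + 2) → BrFrozen m) ⋊[mulAutArrow] Perm (Fin (m + 2))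

section Wreath

variable {m : ℕ}

lemma val_swap_castSucc_succ (i : Fin (m + 1)) (x : Fin (m + 2)) :
    (swap i.castSucc i.succ x : ℕ) = swap (i : ℕ) (i + 1) (x : ℕ) :=
  (Fin.val_injective.swap_apply _ _ _).symm

def wreathGen (m : ℕ) (i : Fin (m + 1)) : FrozenWreath m :=
  ⟨fun x => genCocycle m i x, swap i.castSucc i.succ⟩

lemma wreathGen_braid {i j : Fin (m + 1)} (h : (i : ℕ) + 1 = j) :
    wreathGen m i * wreathGen m j * wreathGen m i =
      wreathGen m j * wreathGen m i * wreathGen m j := by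
  ext x
  · simp only [mulAutArrow_mul_left_apply, mul_right, wreathGen, mul_inv_rev, swap_inv,
      Perm.smul_def, Perm.mul_apply, val_swap_castSucc_succ, ← h]
    exact genCocycle_braid (by omega) x.isLt
  · simp only [mul_right, wreathGen, Perm.mul_apply, val_swap_castSucc_succ, ← h]
    simp only [swap_apply_def]
    split_ifs <;> omega

lemma wreathGen_comm {i j : Fin (m + 1)} (h : (i : ℕ) + 2 ≤ j) :
    wreathGen m i * wreathGen m j = wreathGen m j * wreathGen m i := by
  ext x
  · simp only [mulAutArrow_mul_left_apply, wreathGen, swap_inv, Perm.smul_def,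
      val_swap_castSucc_succ]
    exact genCocycle_comm h
  · simp only [mul_right, wreathGen, Perm.mul_apply, val_swap_castSucc_succ]
    simp only [swap_apply_def]
    split_ifs <;> omega

lemma wreathGen_rels : ∀ r ∈ braidRels (m + 1), FreeGroup.lift (wreathGen m) r = 1 := by
  rintro r (⟨i, j, h, rfl⟩ | ⟨i, j, h, rfl⟩) <;>
    simp only [map_mul, map_inv, FreeGroup.lift_apply_of, mul_inv_eq_one]
  exacts [wreathGen_braid h, wreathGen_comm h]

def toWreath (m : ℕ) : Braid (m + 1) →* FrozenWreath m := PresentedGroup.toGroup wreathGen_rels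

lemma toWreath_of (i : Fin (m + 1)) : toWreath m (.of i) = wreathGen m i :=
  PresentedGroup.toGroup.of wreathGen_rels

lemma map_Xword_eq_one {π : Braid (m + 1) →* Perm (Fin (m + 2))}
    (hπ : ∀ i : Fin (m + 1), π (.of i) = swap i.castSucc i.succ) (k : ℕ) :
    π (Xword m k) = 1 := by
  simp [Xword, bb_of_lt (Nat.succ_pos m), hπ]

lemma toWreath_Xword_right (k : ℕ) : (toWreath m (Xword m k)).right = 1 :=
  map_Xword_eq_one (π := rightHom.comp (toWreath m)) (fun i => by simp [toWreath_of, wreathGen]) k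

lemma toWreath_bb_right_smul_zero {k : ℕ} (hk : 0 < k) :
    (toWreath m (bb m k)).right • (0 : Fin (m + 2)) = 0 := by
  rcases lt_or_ge k (m + 1) with h | h
  · rw [bb_of_lt h, toWreath_of]
    exact swap_apply_of_ne_of_ne (Fin.ne_of_val_ne (by simp; omega)) (Fin.ne_of_val_ne (by simp))
  · rw [bb_of_le h, map_one]; rfl

lemma toWreath_bb_left_zero {k : ℕ} (hk : 0 < k) :
    (toWreath m (bb m k)).left 0 = β (k - 1) := by
  rcases lt_or_ge k (m + 1) with h | h
  · rw [bb_of_lt h, toWreath_of]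
    exact genCocycle_of_lt hk
  · rw [bb_of_le h, β_of_le (by omega)]; rfl

lemma toWreath_Xword_left_zero {k : ℕ} (hk : k < m + 1) :
    (toWreath m (Xword m k)).left 0 = X k := by
  induction k with
  | zero =>
    rw [Xword_zero, bb_of_lt hk, map_mul, toWreath_of, mulAutArrow_mul_left_apply]
    simp [wreathGen, genCocycle_self, genCocycle_succ]
  | succ k ih =>
    have hb := toWreath_bb_right_smul_zero (m := m) (by omega : 0 < k + 1)
    have hbX :
        (toWreath m (bb m (k + 1)) * toWreath m (Xword m k)).right • (0 : Fin (m + 2)) = 0 := by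
      rw [mul_right, toWreath_Xword_right, mul_one, hb]
    rw [Xword_succ, map_mul, map_mul, map_inv, mulAutArrow_mul_left_apply_of_smul_eq hbX,
      mulAutArrow_mul_left_apply_of_smul_eq hb, mulAutArrow_inv_left_apply_of_smul_eq hb,
      ih (by omega), toWreath_bb_left_zero (by omega), Nat.add_sub_cancel,
      β_mul_X_self (by omega), mul_inv_cancel_right]

end Wreath

section Inclusion

variable {m : ℕ} {ι : BrFrozen m →* Braid (m + 1)}
  (hιβ : ∀ i : Fin m, ι (.of (FGen.beta i)) = .of (i.succ : Fin (m + 1)))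
  (hιX : ∀ k : Fin (m + 1), ι (.of (FGen.X k)) = Xword m k)

include hιβ in
lemma map_β (k : ℕ) : ι (β k) = bb m (k + 1) := by
  rcases lt_or_ge k m with hk | hk
  · rw [β_of_lt hk, hιβ, bb_of_lt (by omega)]
    rfl
  · rw [β_of_le hk, bb_of_le (by omega), map_one]

include hιX in
lemma map_X {k : ℕ} (hk : k < m + 1) : ι (X k) = Xword m k := by
  rw [X_of_lt hk, hιX]

include hιβ hιX in
lemma map_genCocycle {i n : ℕ} (hi : i < m + 1) (hn : n < m + 2) :
    ι (genCocycle m i n) = (transversal m n)⁻¹ * bb m i * transversal m (swap i (i + 1) n) := by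
  obtain h | rfl | rfl | h : n < i ∨ n = i ∨ n = i + 1 ∨ i + 1 < n := by omega
  · rw [genCocycle_of_lt h, map_β hιβ, Nat.sub_add_cancel (by omega),
      swap_apply_of_ne_of_ne (by omega) (by omega),
      mul_assoc, (bb_commute_transversal h).eq, inv_mul_cancel_left]
  · rw [genCocycle_self, map_X hιX hi, swap_apply_left, transversal_succ, Xword_eq_conj hi]
    group
  · rw [genCocycle_succ, map_one, swap_apply_right, transversal_succ]
    group
  · rw [genCocycle_of_gt h, map_β hιβ, swap_apply_of_ne_of_ne (by omega) (by omega),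
      mul_assoc, bb_mul_transversal h (by omega), inv_mul_cancel_left]

include hιβ hιX in
lemma map_toWreath_left {π : Braid (m + 1) →* Perm (Fin (m + 2))}
    (hπ : ∀ i : Fin (m + 1), π (.of i) = swap i.castSucc i.succ)
    (g : Braid (m + 1)) (x : Fin (m + 2)) :
    ι ((toWreath m g).left x) = (transversal m x)⁻¹ * g * transversal m ((π g)⁻¹ x) := by
  let mapLeft :
      FrozenWreath m →* (Fin (m + 2) → Braid (m + 1)) ⋊[mulAutArrow] Perm (Fin (m + 2)) :=
    SemidirectProduct.map (ι.compLeft _) (MonoidHom.id _) fun _ => rfl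
  have key : mapLeft.comp (toWreath m) =
      kaloujnineKrasner π fun x : Fin (m + 2) => transversal m x := by
    refine PresentedGroup.ext fun i => ?_
    rw [MonoidHom.comp_apply, toWreath_of]
    ext1
    · funext x
      change ι (genCocycle m i x) =
        _ * _ * transversal m (((π (.of i))⁻¹ • x : Fin (m + 2)) : ℕ)
      rw [hπ, swap_inv, Perm.smul_def, val_swap_castSucc_succ, ← bb_of_lt i.isLt]
      exact map_genCocycle hιβ hιX i.isLt x.isLt
    · exact (hπ i).symm
  exact congrArg (fun w => w.left x) (DFunLike.congr_fun key g)

include hιβ hιX in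
lemma toWreath_map_right_smul_zero (a : BrFrozen m) :
    (toWreath m (ι a)).right • (0 : Fin (m + 2)) = 0 := by
  refine PresentedGroup.generated_by _ ((MulAction.stabilizer _ (0 : Fin (m + 2))).comap
    (rightHom.comp ((toWreath m).comp ι))) (fun g => ?_) a
  rcases g with k | t
  · change (toWreath m (ι (.of (FGen.X k)))).right • (0 : Fin (m + 2)) = 0
    rw [hιX, toWreath_Xword_right, one_smul]
  · change (toWreath m (ι (.of (FGen.beta t)))).right • (0 : Fin (m + 2)) = 0
    rw [← β_val, map_β hιβ]
    exact toWreath_bb_right_smul_zero (by omega)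

include hιβ hιX in
lemma toWreath_map_left_zero (a : BrFrozen m) : (toWreath m (ι a)).left 0 = a := by
  let r : BrFrozen m →* BrFrozen m := (stabilizerEvalLeft 0).comp
    (((toWreath m).comp ι).codRestrict _ (toWreath_map_right_smul_zero hιβ hιX))
  have hr : r = MonoidHom.id _ := by
    refine PresentedGroup.ext fun g => ?_
    rcases g with k | t
    · change (toWreath m (ι (.of (FGen.X k)))).left 0 = _
      rw [hιX, toWreath_Xword_left_zero k.isLt, X_val]
      rfl
    · change (toWreath m (ι (.of (FGen.beta t)))).left 0 = _
      rw [← β_val, map_β hιβ, toWreath_bb_left_zero (by omega), Nat.add_sub_cancel]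
      rfl
  exact DFunLike.congr_fun hr a

end Inclusion

theorem frozen_pure_iso_pure (m : ℕ)
    (ι : BrFrozen m →* Braid (m + 1))
    (hιβ : ∀ i : Fin m,
      ι (PresentedGroup.of (FGen.beta i)) = PresentedGroup.of (i.succ : Fin (m + 1)))
    (hιX : ∀ k : Fin (m + 1), ι (PresentedGroup.of (FGen.X k)) = Xword m (k : ℕ))
    (π : Braid (m + 1) →* Equiv.Perm (Fin (m + 2)))
    (hπ : ∀ i : Fin (m + 1),
      π (PresentedGroup.of i) = Equiv.swap i.castSucc i.succ)
    (π₁ : BrFrozen m →* Equiv.Perm (Fin (m + 1)))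
    (hπ₁X : ∀ k : Fin (m + 1), π₁ (PresentedGroup.of (FGen.X k)) = 1)
    (hπ₁β : ∀ i : Fin m,
      π₁ (PresentedGroup.of (FGen.beta i)) = Equiv.swap i.castSucc i.succ) :
    Set.BijOn ι (π₁.ker : Set (BrFrozen m)) (π.ker : Set (Braid (m + 1))) := by
  have hcomp : π.comp ι = (permSuccHom (m + 1)).comp π₁ := by
    refine PresentedGroup.ext fun g => ?_
    rcases g with k | t
    · simp [hιX, map_Xword_eq_one hπ, hπ₁X]
    · change π (ι (.of (FGen.beta t))) = permSuccHom _ (π₁ (.of (FGen.beta t)))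
      rw [hιβ, hπ, hπ₁β, permSuccHom_swap, Fin.succ_castSucc]
  have hker (a : BrFrozen m) : π (ι a) = 1 ↔ π₁ a = 1 := by
    rw [← MonoidHom.comp_apply, hcomp, MonoidHom.comp_apply,
      map_eq_one_iff _ (permSuccHom_injective _)]
  have hinj : Function.LeftInverse (fun g => (toWreath m g).left 0) ι :=
    toWreath_map_left_zero hιβ hιX
  refine ⟨fun a ha => (hker a).2 ha, hinj.injective.injOn, fun g hg => ?_⟩
  have hg : π g = 1 := hg
  have hιg : ι ((toWreath m g).left 0) = g := by
    simp [map_toWreath_left hιβ hιX hπ, hg, transversal]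
  exact ⟨_, (hker _).1 (by rw [hιg, hg]), hιg⟩
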